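/- A closed M-alternating trail of even length (alternating matched and unmatched edges, starting with one and ending with the other) in a capacitated graph is proper: for every vertex v on the trail, d_v^{T △ M} = d_v^M ≤ c_v; hence if M is a maximum-weight c-matching, no such closed trail is M-augmenting, i.e., w(T \ M) ≤ w(T ∩ M). -/

import Mathlib

variable {V : Type*}

/-- Degree of a vertex with respect to an edge set. -/
def degOn [DecidableEq V] (M : Finset (Sym2 V)) (v : V) : ℕ :=
  (M.filter (fun e => v ∈ e)).card

/-- Total weight of an edge set. -/
def wsum (w : Sym2 V → ℝ) (M : Finset (Sym2 V)) : ℝ := ∑ e ∈ M, w e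

/-- A `c`-matching: a set of edges of `G` with every vertex degree at most its capacity. -/
def IsCMatching [DecidableEq V] (G : SimpleGraph V) (c : V → ℕ) (M : Finset (Sym2 V)) : Prop :=
  (∀ e ∈ M, e ∈ G.edgeSet) ∧ ∀ v, degOn M v ≤ c v

/-- A maximum-weight `c`-matching. -/
def IsMaxCMatching [DecidableEq V] (G : SimpleGraph V) (w : Sym2 V → ℝ) (c : V → ℕ)
    (M : Finset (Sym2 V)) : Prop :=
  IsCMatching G c M ∧ ∀ N, IsCMatching G c N → wsum w N ≤ wsum w M

/-- A list of edges is `M`-alternating if consecutive edges alternate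
between `M` and its complement. -/
def Alternating [DecidableEq V] (M : Finset (Sym2 V)) (l : List (Sym2 V)) : Prop :=
  l.Chain' (fun e f => (e ∈ M ↔ f ∉ M))

/-- Weight (with multiplicity) of the matched edges of a list. -/
def matchedWeight [DecidableEq V] (w : Sym2 V → ℝ) (M : Finset (Sym2 V))
    (l : List (Sym2 V)) : ℝ :=
  ((l.filter (fun e => decide (e ∈ M))).map w).sum

/-- Weight (with multiplicity) of the unmatched edges of a list. -/
def unmatchedWeight [DecidableEq V] (w : Sym2 V → ℝ) (M : Finset (Sym2 V))
    (l : List (Sym2 V)) : ℝ :=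
  ((l.filter (fun e => decide (e ∉ M))).map w).sum

/-- `M`-augmenting: `w(l \ M) > w(l ∩ M)` (multiplicities counted). -/
def Augmenting [DecidableEq V] (w : Sym2 V → ℝ) (M : Finset (Sym2 V)) (l : List (Sym2 V)) : Prop :=
  matchedWeight w M l < unmatchedWeight w M l

/-- Fractional degree `Σ_{e ∈ δ(v)} x_e`. -/
def lpDeg [Fintype V] [DecidableEq V] (x : Sym2 V → ℝ) (v : V) : ℝ :=
  ∑ e : Sym2 V, if v ∈ e then x e else 0

/-- A fractional `c`-matching. -/
def IsFracCMatching [Fintype V] [DecidableEq V] (G : SimpleGraph V) (c : V → ℕ)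
    (x : Sym2 V → ℝ) : Prop :=
  (∀ e, 0 ≤ x e ∧ x e ≤ 1) ∧ (∀ e, e ∉ G.edgeSet → x e = 0) ∧ ∀ v, lpDeg x v ≤ (c v : ℝ)

/-- LP objective value `w^T x`. -/
def lpVal [Fintype V] (w x : Sym2 V → ℝ) : ℝ := ∑ e : Sym2 V, w e * x e

/-- `ν^c(G)`: maximum weight of a `c`-matching. -/
noncomputable def nuC [Fintype V] [DecidableEq V] (G : SimpleGraph V) (w : Sym2 V → ℝ)
    (c : V → ℕ) : ℝ :=
  sSup {r | ∃ M, IsCMatching G c M ∧ r = wsum w M}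

/-- `ν_f^c(G)`: optimum of the fractional `c`-matching LP. -/
noncomputable def nuF [Fintype V] [DecidableEq V] (G : SimpleGraph V) (w : Sym2 V → ℝ)
    (c : V → ℕ) : ℝ :=
  sSup {r | ∃ x, IsFracCMatching G c x ∧ r = lpVal w x}

/-- A capacitated graph is stable if `ν^c(G) = ν_f^c(G)`. -/
def Stable [Fintype V] [DecidableEq V] (G : SimpleGraph V) (w : Sym2 V → ℝ) (c : V → ℕ) : Prop :=
  nuC G w c = nuF G w c

/-- The ε-augmentation `x^{M/W}(ε)` of a walk. -/
def epsAug [DecidableEq V] {G : SimpleGraph V} {u v : V} (M : Finset (Sym2 V))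
    (p : G.Walk u v) (ε : ℝ) : Sym2 V → ℝ :=
  fun e => if e ∈ M then 1 - (p.edges.count e : ℝ) * ε else (p.edges.count e : ℝ) * ε

/-- Symmetric difference of edge sets. -/
def symmDiffE [DecidableEq V] (M T : Finset (Sym2 V)) : Finset (Sym2 V) := (M \ T) ∪ (T \ M)

/-!
Give matched edges the sign `+1` and unmatched edges the sign `-1`. Along an `M`-alternating
walk the two edges through an interior visit of a vertex have opposite signs, so the signed
degree of the walk at `v` only sees its first and last edge; for a closed walk of even length
these have opposite signs too. Hence every vertex meets as many matched as unmatched edges of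
a closed even alternating trail `T`, so `M △ T` has the degrees of `M` and is a `c`-matching of
weight `w(M) - w(M ∩ T) + w(T \ M)`; maximality of `M` gives `w(T \ M) ≤ w(M ∩ T)`.
-/

section Exchange

variable [DecidableEq V]

lemma sum_symmDiffE_add_sum_inter {β : Type*} [AddCommMonoid β] (f : Sym2 V → β)
    (M T : Finset (Sym2 V)) :
    ∑ e ∈ symmDiffE M T, f e + ∑ e ∈ M ∩ T, f e = ∑ e ∈ M, f e + ∑ e ∈ T \ M, f e := by
  rw [symmDiffE, Finset.sum_union disjoint_sdiff_sdiff, add_right_comm,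
    ← Finset.sum_union (Finset.disjoint_sdiff_inter M T), Finset.sdiff_union_inter]

lemma degOn_eq_sum (M : Finset (Sym2 V)) (v : V) :
    degOn M v = ∑ e ∈ M, if v ∈ e then 1 else 0 :=
  Finset.card_filter _ _

lemma degOn_symmDiffE_add_degOn_inter (M T : Finset (Sym2 V)) (v : V) :
    degOn (symmDiffE M T) v + degOn (M ∩ T) v = degOn M v + degOn (T \ M) v := by
  simp only [degOn_eq_sum, sum_symmDiffE_add_sum_inter]

lemma wsum_symmDiffE_add_wsum_inter (w : Sym2 V → ℝ) (M T : Finset (Sym2 V)) :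
    wsum w (symmDiffE M T) + wsum w (M ∩ T) = wsum w M + wsum w (T \ M) :=
  sum_symmDiffE_add_sum_inter w M T

lemma IsCMatching.symmDiffE {G : SimpleGraph V} {c : V → ℕ} {M T : Finset (Sym2 V)}
    (hM : IsCMatching G c M) (hT : ∀ e ∈ T, e ∈ G.edgeSet)
    (hbal : ∀ v, degOn (M ∩ T) v = degOn (T \ M) v) :
    IsCMatching G c (symmDiffE M T) := by
  refine ⟨fun e he => ?_, fun v => ?_⟩
  · rcases Finset.mem_union.mp he with he | he
    exacts [hM.1 e (Finset.mem_sdiff.mp he).1, hT e (Finset.mem_sdiff.mp he).1]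
  · have := degOn_symmDiffE_add_degOn_inter M T v
    have := hM.2 v
    have := hbal v
    omega

lemma IsMaxCMatching.wsum_sdiff_le_wsum_inter {G : SimpleGraph V} {w : Sym2 V → ℝ} {c : V → ℕ}
    {M T : Finset (Sym2 V)} (hmax : IsMaxCMatching G w c M) (hT : ∀ e ∈ T, e ∈ G.edgeSet)
    (hbal : ∀ v, degOn (M ∩ T) v = degOn (T \ M) v) :
    wsum w (T \ M) ≤ wsum w (M ∩ T) := by
  have := hmax.2 _ (hmax.1.symmDiffE hT hbal)
  have := wsum_symmDiffE_add_wsum_inter w M T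
  linarith

end Exchange

section SignedDegree

variable [DecidableEq V] (M : Finset (Sym2 V))

def edgeSign (e : Sym2 V) : ℤ := if e ∈ M then 1 else -1

def signedDeg (l : List (Sym2 V)) (v : V) : ℤ :=
  (l.map fun e => if v ∈ e then edgeSign M e else 0).sum

lemma edgeSign_eq_neg {e f : Sym2 V} (h : e ∈ M ↔ f ∉ M) : edgeSign M f = -edgeSign M e := by
  by_cases he : e ∈ M <;> simp_all [edgeSign]

lemma signedDeg_cons_mk {a b : V} (hab : a ≠ b) (l : List (Sym2 V)) (v : V) :
    signedDeg M (s(a, b) :: l) v =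
      (if v = a then edgeSign M s(a, b) else 0) + (if v = b then edgeSign M s(a, b) else 0) +
        signedDeg M l v := by
  by_cases hva : v = a
  · subst hva; simp [signedDeg, hab]
  · by_cases hvb : v = b
    · subst hvb; simp [signedDeg, hab.symm]
    · simp [signedDeg, hva, hvb]

lemma signedDeg_eq_degOn_sub_degOn {l : List (Sym2 V)} (hl : l.Nodup) (v : V) :
    signedDeg M l v = degOn (M ∩ l.toFinset) v - degOn (l.toFinset \ M) v := by
  rw [signedDeg, ← List.sum_toFinset _ hl, Finset.inter_comm, ← Finset.filter_mem_eq_inter,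
    Finset.sdiff_eq_filter, degOn_eq_sum, degOn_eq_sum,
    ← Finset.sum_filter_add_sum_filter_not _ (· ∈ M)]
  push_cast
  rw [sub_eq_add_neg, ← Finset.sum_neg_distrib]
  congr 1 <;> refine Finset.sum_congr rfl fun e he => ?_ <;>
    simp [edgeSign, (Finset.mem_filter.mp he).2, apply_ite Neg.neg]

variable {M}

lemma Alternating.getLast_mem_iff {l : List (Sym2 V)} (h : Alternating M l) (hne : l ≠ []) :
    l.getLast hne ∈ M ↔ (l.head hne ∈ M ↔ Odd l.length) := by
  induction l with
  | nil => exact absurd rfl hne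
  | cons e l ih =>
    cases l with
    | nil => simp
    | cons f l =>
      obtain ⟨hef, hl⟩ := List.isChain_cons_cons.mp h
      have := ih hl (List.cons_ne_nil f l)
      simp only [List.getLast_cons_cons, List.head_cons, List.length_cons, Nat.odd_add_one] at this ⊢
      tauto

theorem SimpleGraph.Walk.signedDeg_edges {G : SimpleGraph V} {a b : V} (p : G.Walk a b)
    (hne : p.edges ≠ []) (halt : Alternating M p.edges) (v : V) :
    signedDeg M p.edges v = (if v = a then edgeSign M (p.edges.head hne) else 0) +
      (if v = b then edgeSign M (p.edges.getLast hne) else 0) := by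
  induction p with
  | nil => exact absurd rfl hne
  | @cons a c b h q ih =>
    cases q with
    | nil =>
      simp only [SimpleGraph.Walk.edges_cons, SimpleGraph.Walk.edges_nil, List.head_cons,
        List.getLast_singleton, signedDeg_cons_mk M h.ne]
      simp [signedDeg]
    | @cons _ d _ h' q =>
      obtain ⟨hrel, hq⟩ := List.isChain_cons_cons.mp halt
      have := ih (List.cons_ne_nil _ _) hq
      simp only [SimpleGraph.Walk.edges_cons, List.head_cons, List.getLast_cons_cons] at this ⊢
      rw [signedDeg_cons_mk M h.ne, this, edgeSign_eq_neg M (e := s(a, c)) (f := s(c, d)) hrel]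
      split_ifs <;> ring

end SignedDegree

section Weights

variable [DecidableEq V] (w : Sym2 V → ℝ) (M : Finset (Sym2 V)) {l : List (Sym2 V)}

lemma matchedWeight_eq_wsum_inter (hl : l.Nodup) :
    matchedWeight w M l = wsum w (M ∩ l.toFinset) := by
  rw [matchedWeight, wsum, ← List.sum_toFinset w (hl.filter _), List.toFinset_filter,
    Finset.inter_comm, ← Finset.filter_mem_eq_inter]
  simp

lemma unmatchedWeight_eq_wsum_sdiff (hl : l.Nodup) :
    unmatchedWeight w M l = wsum w (l.toFinset \ M) := by
  rw [unmatchedWeight, wsum, ← List.sum_toFinset w (hl.filter _), List.toFinset_filter,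
    Finset.sdiff_eq_filter]
  simp

end Weights

theorem SimpleGraph.Walk.IsTrail.degOn_inter_eq_degOn_sdiff [DecidableEq V]
    {M : Finset (Sym2 V)} {G : SimpleGraph V} {u : V} {p : G.Walk u u} (hp : p.IsTrail)
    (halt : Alternating M p.edges) (heven : Even p.length) (v : V) :
    degOn (M ∩ p.edges.toFinset) v = degOn (p.edges.toFinset \ M) v := by
  have hzero : signedDeg M p.edges v = 0 := by
    by_cases hne : p.edges = []
    · simp [hne, signedDeg]
    · have hodd : ¬Odd p.edges.length := by
        rw [SimpleGraph.Walk.length_edges, Nat.not_odd_iff_even]; exact heven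
      have hrel : p.edges.head hne ∈ M ↔ p.edges.getLast hne ∉ M := by
        have := halt.getLast_mem_iff hne
        tauto
      rw [p.signedDeg_edges hne halt v, edgeSign_eq_neg M hrel]
      split_ifs <;> ring
  have := signedDeg_eq_degOn_sub_degOn M hp.edges_nodup v
  omega

theorem stmt16_general [DecidableEq V] (G : SimpleGraph V) (w : Sym2 V → ℝ)
    (c : V → ℕ) (M : Finset (Sym2 V)) (hM : IsCMatching G c M)
    {u : V} (p : G.Walk u u) (htrail : p.IsTrail)
    (halt : Alternating M p.edges) (heven : Even p.length) :
    (∀ v ∈ p.support,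
        degOn (symmDiffE M p.edges.toFinset) v = degOn M v ∧ degOn M v ≤ c v) ∧
      (IsMaxCMatching G w c M → ¬ Augmenting w M p.edges) := by
  have hbal := htrail.degOn_inter_eq_degOn_sdiff halt heven
  have hT : ∀ e ∈ p.edges.toFinset, e ∈ G.edgeSet := fun e he =>
    p.edges_subset_edgeSet (List.mem_toFinset.mp he)
  refine ⟨fun v _ => ⟨?_, hM.2 v⟩, fun hmax => ?_⟩
  · have := degOn_symmDiffE_add_degOn_inter M p.edges.toFinset v
    have := hbal v
    omega
  · rw [Augmenting, not_lt, matchedWeight_eq_wsum_inter w M htrail.edges_nodup,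
      unmatchedWeight_eq_wsum_sdiff w M htrail.edges_nodup]
    exact hmax.wsum_sdiff_le_wsum_inter hT hbal

/-- a closed `M`-alternating trail of even length is proper: every vertex on
it satisfies `d_v^{T △ M} = d_v^M ≤ c_v`; hence if `M` is maximum-weight, no such closed
trail is `M`-augmenting. -/
theorem stmt16 [Fintype V] [DecidableEq V] (G : SimpleGraph V) (w : Sym2 V → ℝ)
    (hw : ∀ e, 0 ≤ w e) (c : V → ℕ) (M : Finset (Sym2 V)) (hM : IsCMatching G c M)
    {u : V} (p : G.Walk u u) (htrail : p.IsTrail)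
    (halt : Alternating M p.edges) (heven : Even p.length) :
    (∀ v ∈ p.support,
        degOn (symmDiffE M p.edges.toFinset) v = degOn M v ∧ degOn M v ≤ c v) ∧
      (IsMaxCMatching G w c M → ¬ Augmenting w M p.edges) :=
  stmt16_general G w c M hM p htrail halt heven
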